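/- arXiv:2409.04502 — 4 statements merged into one kernel-verified Lean document; each statement's English description precedes it below -/
import Mathlib

section
/- The sequence of polar Jacobi polynomials satisfies the recurrence relation: for every integer n ≥ 0 and all z ∈ ℂ, P_{n+1}(z;a,b;ξ) = (z + a_n)·P_n(z;a,b;ξ) + b_n·P_{n−1}(z;a,b;ξ) + P_{n+1}^{(a−1,b−1)}(ξ), with the conventions P_{−1}(·;a,b;ξ) = 0 and P_0(·;a,b;ξ) = 1, where a_n = (a+b−2)(a−b)/((a+b+2n)(a+b+2n+2)) and b_n = −4(n+1)(a+n)(b+n)(a+b+n−1)/((a+b+2n−1)(a+b+2n)²(a+b+2n+1)). -/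
open Polynomial

/-- Recurrence coefficient β_n^{(a,b)} of the monic Jacobi polynomials. -/
noncomputable def jacobiBeta (a b : ℂ) (n : ℕ) : ℂ :=
  (b ^ 2 - a ^ 2) / ((a + b + 2 * n) * (a + b + 2 * n + 2))

/-- Recurrence coefficient γ_n^{(a,b)} of the monic Jacobi polynomials. -/
noncomputable def jacobiGamma (a b : ℂ) (n : ℕ) : ℂ :=
  (4 * n * (a + n) * (b + n) * (a + b + n)) /
    ((a + b + 2 * n - 1) * (a + b + 2 * n) ^ 2 * (a + b + 2 * n + 1))

/-- The monic Jacobi polynomials `P_n^{(a,b)}`, defined by the three-term recurrence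
`P_{n+1} = (X - β_n) P_n - γ_n P_{n-1}` with `P_{-1} = 0`, `P_0 = 1`. -/
noncomputable def jacobiP (a b : ℂ) : ℕ → Polynomial ℂ
  | 0 => 1
  | 1 => X - C (jacobiBeta a b 0)
  | n + 2 => (X - C (jacobiBeta a b (n + 1))) * jacobiP a b (n + 1)
      - C (jacobiGamma a b (n + 1)) * jacobiP a b n
/-- recurrence relation of the polar Jacobi polynomials:
`P_{n+1}(z) = (z + a_n) P_n(z) + b_n P_{n-1}(z) + P_{n+1}^{(a-1,b-1)}(ξ)`,
with the conventions `P_{-1} = 0`, `P_0 = 1`. -/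
theorem polarJacobi_recurrence (a b ξ : ℂ)
    (hab : ∀ m : ℤ, -2 ≤ m → a + b + (m : ℂ) ≠ 0)
    (P : ℕ → Polynomial ℂ)
    (hP : ∀ (n : ℕ) (z : ℂ), (z - ξ) * (P n).eval z =
      (jacobiP (a - 1) (b - 1) (n + 1)).eval z - (jacobiP (a - 1) (b - 1) (n + 1)).eval ξ) :
    ∀ (n : ℕ) (z : ℂ),
      (P (n + 1)).eval z =
        (z + (a + b - 2) * (a - b) / ((a + b + 2 * n) * (a + b + 2 * n + 2)))
            * (P n).eval z
        + (-(4 * ((n : ℂ) + 1) * (a + n) * (b + n) * (a + b + n - 1)) /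
            ((a + b + 2 * n - 1) * (a + b + 2 * n) ^ 2 * (a + b + 2 * n + 1)))
            * (if n = 0 then (0 : ℂ) else (P (n - 1)).eval z)
        + (jacobiP (a - 1) (b - 1) (n + 1)).eval ξ := by
  intro n z
  set Q := jacobiP (a - 1) (b - 1) with hQ
  set c : ℂ := (a + b - 2) * (a - b) / ((a + b + 2 * n) * (a + b + 2 * n + 2)) with hc
  set d : ℂ := -(4 * ((n : ℂ) + 1) * (a + n) * (b + n) * (a + b + n - 1)) /
      ((a + b + 2 * n - 1) * (a + b + 2 * n) ^ 2 * (a + b + 2 * n + 1)) with hd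
  have hcβ : c = -jacobiBeta (a - 1) (b - 1) (n + 1) := by
    simp only [hc, jacobiBeta]; push_cast; ring
  have hdγ : d = -jacobiGamma (a - 1) (b - 1) (n + 1) := by
    simp only [hd, jacobiGamma]; push_cast; ring
  set Pm : Polynomial ℂ := if n = 0 then 0 else P (n - 1) with hPm
  have hPmEval : ∀ w : ℂ, (w - ξ) * Pm.eval w = (Q n).eval w - (Q n).eval ξ := by
    intro w
    rcases Nat.eq_zero_or_pos n with h | h
    · subst h; simp [hPm, hQ, jacobiP]
    · have hn : n ≠ 0 := h.ne'
      simp only [hPm, if_neg hn]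
      have := hP (n - 1) w
      rwa [Nat.sub_add_cancel h] at this
  have hF : (X - C ξ) * (P (n + 1) - ((X + C c) * P n + C d * Pm + C ((Q (n + 1)).eval ξ))) = 0 := by
    apply Polynomial.funext
    intro w
    simp only [eval_mul, eval_sub, eval_add, eval_X, eval_C, eval_zero]
    have h1 := hP (n + 1) w
    have h2 := hP n w
    have h3 := hPmEval w
    have hrecw : (Q (n + 2)).eval w = (w - jacobiBeta (a - 1) (b - 1) (n + 1)) * (Q (n + 1)).eval w
        - jacobiGamma (a - 1) (b - 1) (n + 1) * (Q n).eval w := by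
      simp [hQ, jacobiP]
    have hrecξ : (Q (n + 2)).eval ξ = (ξ - jacobiBeta (a - 1) (b - 1) (n + 1)) * (Q (n + 1)).eval ξ
        - jacobiGamma (a - 1) (b - 1) (n + 1) * (Q n).eval ξ := by
      simp [hQ, jacobiP]
    rw [hcβ, hdγ]
    have h1' : (w - ξ) * (P (n + 1)).eval w = (Q (n + 2)).eval w - (Q (n + 2)).eval ξ := h1
    linear_combination h1' - (w - jacobiBeta (a - 1) (b - 1) (n + 1)) * h2
      + jacobiGamma (a - 1) (b - 1) (n + 1) * h3 + hrecw - hrecξ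
  have hXξ : (X - C ξ : Polynomial ℂ) ≠ 0 := X_sub_C_ne_zero ξ
  have hF0 : P (n + 1) = (X + C c) * P n + C d * Pm + C ((Q (n + 1)).eval ξ) :=
    sub_eq_zero.mp ((mul_eq_zero.mp hF).resolve_left hXξ)
  have := congrArg (Polynomial.eval z) hF0
  simp only [eval_mul, eval_add, eval_X, eval_C] at this
  rw [this]
  congr 1
  congr 1
  congr 1
  split_ifs with h
  · simp [hPm, h]
  · simp [hPm, h]
end

section
/- (Polar ultraspherical case.) Let a ∈ ℂ satisfy 2a + m ≠ 0 for every integer m ≥ −2, and let ξ ∈ ℂ. Then for every integer n ≥ 0 and all z ∈ ℂ, P_{n+1}(z;a,a;ξ) = z·P_n(z;a,a;ξ) − ((n+1)(2a+n−1)/((2a+2n−1)(2a+2n+1)))·P_{n−1}(z;a,a;ξ) + P_{n+1}^{(a−1,a−1)}(ξ), with the conventions P_{−1}(·;a,a;ξ) = 0 and P_0(·;a,a;ξ) = 1. -/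
open Polynomial

/-! For `a = b` the Jacobi recurrence has no `β` term, `Q_{n+2} = X Q_{n+1} - γ_{n+1} Q_n`.
Multiplying the claimed recurrence by `X - ξ` and substituting `(X - ξ) P_k = Q_{k+1} - Q_{k+1}(ξ)`
turns it into this recurrence for `Q` minus its value at `ξ`; since `ℂ[X]` is a domain, the
factor `X - ξ` cancels. -/

theorem jacobiBeta_self (a : ℂ) (n : ℕ) : jacobiBeta a a n = 0 := by
  simp [jacobiBeta]

theorem jacobiP_self_add_two (a : ℂ) (n : ℕ) :
    jacobiP a a (n + 2) = X * jacobiP a a (n + 1) - C (jacobiGamma a a (n + 1)) * jacobiP a a n := by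
  rw [jacobiP, jacobiBeta_self, map_zero, sub_zero]

theorem jacobiGamma_sub_one_sub_one_succ (a : ℂ) (n : ℕ) (h : 2 * a + 2 * n ≠ 0) :
    jacobiGamma (a - 1) (a - 1) (n + 1) =
      ((n : ℂ) + 1) * (2 * a + n - 1) / ((2 * a + 2 * n - 1) * (2 * a + 2 * n + 1)) := by
  calc jacobiGamma (a - 1) (a - 1) (n + 1)
      = ((n + 1) * (2 * a + n - 1) * (2 * a + 2 * n) ^ 2) /
          ((2 * a + 2 * n - 1) * (2 * a + 2 * n + 1) * (2 * a + 2 * n) ^ 2) := by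
        rw [jacobiGamma]
        push_cast
        congr 1 <;> ring
    _ = _ := mul_div_mul_right _ _ (pow_ne_zero 2 h)

theorem dividedDifference_threeTerm_recurrence {R : Type*} [CommRing R] [IsDomain R] {ξ c : R}
    {p₀ p₁ p₂ q₀ q₁ q₂ : R[X]} (hq : q₂ = X * q₁ - C c * q₀)
    (h₀ : (X - C ξ) * p₀ = q₀ - C (q₀.eval ξ)) (h₁ : (X - C ξ) * p₁ = q₁ - C (q₁.eval ξ))
    (h₂ : (X - C ξ) * p₂ = q₂ - C (q₂.eval ξ)) :
    p₂ = X * p₁ - C c * p₀ + C (q₁.eval ξ) := by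
  have hq_eval : C (q₂.eval ξ) = C ξ * C (q₁.eval ξ) - C c * C (q₀.eval ξ) := by
    simp [hq]
  refine mul_left_cancel₀ (X_sub_C_ne_zero ξ) ?_
  linear_combination h₂ - X * h₁ + C c * h₀ + hq - hq_eval

/-- polar ultraspherical case: recurrence relation of the polar
ultraspherical polynomials `P_n(·;a,a;ξ)`, with conventions `P_{-1}=0`, `P_0=1`. -/
theorem polarUltraspherical_recurrence (a ξ : ℂ)
    (ha : ∀ m : ℤ, -2 ≤ m → 2 * a + (m : ℂ) ≠ 0)
    (P : ℕ → Polynomial ℂ)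
    (hP : ∀ (n : ℕ) (z : ℂ), (z - ξ) * (P n).eval z =
      (jacobiP (a - 1) (a - 1) (n + 1)).eval z - (jacobiP (a - 1) (a - 1) (n + 1)).eval ξ) :
    ∀ (n : ℕ) (z : ℂ),
      (P (n + 1)).eval z =
        z * (P n).eval z
        - (((n : ℂ) + 1) * (2 * a + n - 1) / ((2 * a + 2 * n - 1) * (2 * a + 2 * n + 1)))
            * (if n = 0 then (0 : ℂ) else (P (n - 1)).eval z)
        + (jacobiP (a - 1) (a - 1) (n + 1)).eval ξ := by
  intro n z
  set Q := jacobiP (a - 1) (a - 1)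
  have hPoly : ∀ k, (X - C ξ) * P k = Q (k + 1) - C ((Q (k + 1)).eval ξ) := fun k =>
    Polynomial.funext fun r => by simpa using hP k r
  have hPrev : (X - C ξ) * (if n = 0 then 0 else P (n - 1)) = Q n - C ((Q n).eval ξ) := by
    rcases n with _ | k
    · simp [Q, jacobiP]
    · simpa using hPoly k
  have hn : 2 * a + 2 * (n : ℂ) ≠ 0 := by exact_mod_cast ha (2 * n) (by omega)
  have key := dividedDifference_threeTerm_recurrence (jacobiP_self_add_two _ n) hPrev (hPoly n)
    (hPoly (n + 1))
  rw [jacobiGamma_sub_one_sub_one_succ a n hn] at key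
  rw [key]
  split_ifs <;> simp [Q]
end

section
/- Let ξ ∈ ℂ and n ≥ 1 an integer. Every root of the polar Jacobi polynomial P_n(·;α,β;ξ) has multiplicity at most 2, and every root of multiplicity exactly 2 is a real number lying in the interval [−1,1]. -/
open Polynomial MeasureTheory Set intervalIntegral

/-- The Jacobi weight `w(x) = (1-x)^α (1+x)^β` on `(-1,1)`. -/
noncomputable def jacobiWeight (α β x : ℝ) : ℝ := (1 - x) ^ α * (1 + x) ^ β

section Aux
variable {α β : ℝ}

lemma jacobiWeight_pos {x : ℝ} (hx : x ∈ Set.Ioo (-1:ℝ) 1) : 0 < jacobiWeight α β x := by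
  have h1 : (0:ℝ) < 1 - x := by linarith [hx.2]
  have h2 : (0:ℝ) < 1 + x := by linarith [hx.1]
  exact mul_pos (Real.rpow_pos_of_pos h1 _) (Real.rpow_pos_of_pos h2 _)

lemma jacobiWeight_continuousOn :
    ContinuousOn (jacobiWeight α β) (Set.Ioo (-1:ℝ) 1) := by
  apply ContinuousOn.mul
  · refine ContinuousOn.rpow_const (by fun_prop) fun x hx => Or.inl ?_
    simp only [mem_Ioo] at hx; intro h; linarith [sub_eq_zero.mp h]
  · refine ContinuousOn.rpow_const (by fun_prop) fun x hx => Or.inl ?_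
    simp only [mem_Ioo] at hx; intro h
    have : x = -1 := by linarith [eq_neg_of_add_eq_zero_right h]
    linarith [hx.1]

lemma intervalIntegrable_mul_jacobiWeight (hα : -1 < α) (hβ : -1 < β)
    (g : ℝ → ℝ) (hg : Continuous g) :
    IntervalIntegrable (fun x => g x * jacobiWeight α β x) volume (-1) 1 := by
  have hleft : IntervalIntegrable (fun x => g x * jacobiWeight α β x) volume (-1) 0 := by
    have h1 : IntervalIntegrable (fun x : ℝ => (1 + x) ^ β) volume (-1) 0 := by
      have := (intervalIntegrable_rpow' hβ (a := 0) (b := 1)).comp_add_right 1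
      norm_num at this
      simpa [add_comm] using this
    have hcont : ContinuousOn (fun x : ℝ => g x * (1 - x) ^ α) (Set.uIcc (-1:ℝ) 0) := by
      refine hg.continuousOn.mul (ContinuousOn.rpow_const (by fun_prop) fun x hx => Or.inl ?_)
      rw [Set.uIcc_of_le (by norm_num)] at hx
      have := hx.2; intro h; linarith [sub_eq_zero.mp h]
    have h2 := h1.continuousOn_mul hcont
    simpa [jacobiWeight, mul_assoc] using h2
  have hright : IntervalIntegrable (fun x => g x * jacobiWeight α β x) volume 0 1 := by
    have h1 : IntervalIntegrable (fun x : ℝ => (1 - x) ^ α) volume 0 1 := by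
      have := (intervalIntegrable_rpow' hα (a := 0) (b := 1)).comp_sub_left 1
      norm_num at this
      exact this.symm
    have hcont : ContinuousOn (fun x : ℝ => g x * (1 + x) ^ β) (Set.uIcc (0:ℝ) 1) := by
      refine hg.continuousOn.mul (ContinuousOn.rpow_const (by fun_prop) fun x hx => Or.inl ?_)
      rw [Set.uIcc_of_le (by norm_num)] at hx
      have := hx.1; intro h; linarith [eq_neg_of_add_eq_zero_right h]
    have h2 := h1.continuousOn_mul hcont
    simpa [jacobiWeight, mul_assoc, mul_comm, mul_left_comm] using h2
  exact hleft.trans hright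

lemma intervalIntegrable_poly_mul_jacobiWeight (hα : -1 < α) (hβ : -1 < β) (p : ℝ[X]) :
    IntervalIntegrable (fun x => p.eval x * jacobiWeight α β x) volume (-1) 1 :=
  intervalIntegrable_mul_jacobiWeight hα hβ _ p.continuous

lemma integral_poly_mul_jacobiWeight_pos (hα : -1 < α) (hβ : -1 < β) (p : ℝ[X]) (hp : p ≠ 0)
    (hnn : ∀ x ∈ Set.Ioo (-1:ℝ) 1, 0 ≤ p.eval x) :
    0 < ∫ x in (-1:ℝ)..1, p.eval x * jacobiWeight α β x := by
  set F := fun x => p.eval x * jacobiWeight α β x with hF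
  have hFi : IntervalIntegrable F volume (-1) 1 :=
    intervalIntegrable_poly_mul_jacobiWeight hα hβ p
  obtain ⟨x0, hx0⟩ : (Set.Ioo (-1:ℝ) 1 \ {x | p.IsRoot x}).Nonempty := by
    refine Set.Infinite.nonempty ?_
    exact (Set.Ioo_infinite (by norm_num)).diff (p.finite_setOf_isRoot hp)
  have hx0mem : x0 ∈ Set.Ioo (-1:ℝ) 1 := hx0.1
  have hpx0 : 0 < p.eval x0 := lt_of_le_of_ne (hnn _ hx0mem) (Ne.symm hx0.2)
  have hFx0 : 0 < F x0 := mul_pos hpx0 (jacobiWeight_pos hx0mem)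
  have hFcont : ContinuousAt F x0 := by
    apply ContinuousAt.mul p.continuous.continuousAt
    exact (jacobiWeight_continuousOn (α := α) (β := β)).continuousAt
      (isOpen_Ioo.mem_nhds hx0mem)
  have hmem : F ⁻¹' (Set.Ioi 0) ∩ Set.Ioo (-1) 1 ∈ nhds x0 :=
    Filter.inter_mem (hFcont.preimage_mem_nhds (Ioi_mem_nhds hFx0))
      (isOpen_Ioo.mem_nhds hx0mem)
  obtain ⟨u, v, huv, hsub⟩ := mem_nhds_iff_exists_Ioo_subset.mp hmem
  have huv' : u < v := huv.1.trans huv.2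
  obtain ⟨hu1, hv1⟩ := (Set.Ioo_subset_Ioo_iff huv').mp (hsub.trans Set.inter_subset_right)
  have hu1' : u < 1 := lt_of_lt_of_le huv' hv1
  have hv1' : -1 < v := lt_of_le_of_lt hu1 huv'
  have hIl : IntervalIntegrable F volume (-1) u := by
    apply hFi.mono_set
    rw [Set.uIcc_of_le (by linarith), Set.uIcc_of_le (by norm_num)]
    exact Set.Icc_subset_Icc le_rfl (by linarith)
  have hIm : IntervalIntegrable F volume u v := by
    apply hFi.mono_set
    rw [Set.uIcc_of_le huv'.le, Set.uIcc_of_le (by norm_num)]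
    exact Set.Icc_subset_Icc hu1 (by linarith)
  have hIr : IntervalIntegrable F volume v 1 := by
    apply hFi.mono_set
    rw [Set.uIcc_of_le (by linarith), Set.uIcc_of_le (by norm_num)]
    exact Set.Icc_subset_Icc (by linarith) le_rfl
  have hFnn : ∀ x ∈ Set.Ioo (-1:ℝ) 1, 0 ≤ F x := fun x hx =>
    mul_nonneg (hnn x hx) (jacobiWeight_pos hx).le
  have hl : 0 ≤ ∫ x in (-1:ℝ)..u, F x := by
    refine integral_nonneg_of_ae_restrict hu1 ?_
    rw [← Measure.restrict_congr_set (MeasureTheory.Ioo_ae_eq_Icc)]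
    refine ae_restrict_of_forall_mem measurableSet_Ioo fun x hx => ?_
    exact hFnn x ⟨hx.1, lt_of_lt_of_le hx.2 hu1'.le⟩
  have hr : 0 ≤ ∫ x in v..(1:ℝ), F x := by
    refine integral_nonneg_of_ae_restrict hv1 ?_
    rw [← Measure.restrict_congr_set (MeasureTheory.Ioo_ae_eq_Icc)]
    refine ae_restrict_of_forall_mem measurableSet_Ioo fun x hx => ?_
    exact hFnn x ⟨lt_of_le_of_lt hv1'.le hx.1, hx.2⟩
  have hm : 0 < ∫ x in u..v, F x :=
    intervalIntegral_pos_of_pos_on hIm (fun x hx => (hsub hx).1) huv'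
  have hsplit1 : (∫ x in (-1:ℝ)..u, F x) + (∫ x in u..v, F x) = ∫ x in (-1:ℝ)..v, F x :=
    integral_add_adjacent_intervals hIl hIm
  have hsplit2 : (∫ x in (-1:ℝ)..v, F x) + (∫ x in v..(1:ℝ), F x) = ∫ x in (-1:ℝ)..1, F x :=
    integral_add_adjacent_intervals (hIl.trans hIm) hIr
  linarith

/-- If a real polynomial is orthogonal (w.r.t. the Jacobi weight) to all monomials of
degree `< n` and `q` has degree `< n`, then `∫ R q w = 0`. -/
lemma integral_mul_eq_zero_of_orth (hα : -1 < α) (hβ : -1 < β) (R q : ℝ[X]) (n : ℕ)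
    (hdeg : q.natDegree < n)
    (horth : ∀ k, k < n → ∫ x in (-1:ℝ)..1, R.eval x * x ^ k * jacobiWeight α β x = 0) :
    ∫ x in (-1:ℝ)..1, (R * q).eval x * jacobiWeight α β x = 0 := by
  have hterm : ∀ k : ℕ, IntervalIntegrable
      (fun x => q.coeff k * (R.eval x * x ^ k * jacobiWeight α β x)) volume (-1) 1 := by
    intro k
    have := (intervalIntegrable_poly_mul_jacobiWeight hα hβ (R * X ^ k)).const_mul (q.coeff k)
    simpa [mul_assoc] using this
  have hsum : (∫ x in (-1:ℝ)..1, (R * q).eval x * jacobiWeight α β x)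
      = ∑ k ∈ Finset.range (q.natDegree + 1),
          ∫ x in (-1:ℝ)..1, q.coeff k * (R.eval x * x ^ k * jacobiWeight α β x) := by
    rw [← intervalIntegral.integral_finset_sum (fun k _ => hterm k)]
    apply intervalIntegral.integral_congr
    intro x _
    show eval x (R * q) * jacobiWeight α β x
        = ∑ k ∈ Finset.range (q.natDegree + 1), q.coeff k * (eval x R * x ^ k * jacobiWeight α β x)
    rw [eval_mul]
    conv_lhs => rw [q.eval_eq_sum_range]
    rw [Finset.mul_sum, Finset.sum_mul]
    apply Finset.sum_congr rfl; intro k _; ring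
  rw [hsum]
  apply Finset.sum_eq_zero
  intro k hk
  have hkn : k < n := by
    have : k ≤ q.natDegree := Nat.lt_succ_iff.mp (Finset.mem_range.mp hk)
    omega
  rw [intervalIntegral.integral_const_mul, horth k hkn, mul_zero]

end Aux

/-- Extract a real polynomial from a complex one by applying `f` to the coefficients. -/
noncomputable def repart (f : ℂ → ℝ) (p : ℂ[X]) : ℝ[X] :=
  ∑ k ∈ Finset.range (p.natDegree + 1), C (f (p.coeff k)) * X ^ k

lemma repart_coeff (f : ℂ → ℝ) (p : ℂ[X]) (m : ℕ) :
    (repart f p).coeff m = if m ≤ p.natDegree then f (p.coeff m) else 0 := by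
  rw [repart, finset_sum_coeff]
  simp only [coeff_C_mul, coeff_X_pow, mul_ite, mul_one, mul_zero]
  rw [Finset.sum_ite_eq (Finset.range (p.natDegree + 1)) m]
  simp [Nat.lt_succ_iff]

lemma repart_natDegree_le (f : ℂ → ℝ) (p : ℂ[X]) : (repart f p).natDegree ≤ p.natDegree := by
  refine natDegree_le_iff_coeff_eq_zero.mpr fun m hm => ?_
  rw [repart_coeff]
  simp [Nat.not_le.mpr hm]

lemma repart_re_eval (p : ℂ[X]) (x : ℝ) :
    (repart Complex.re p).eval x = (p.eval (x:ℂ)).re := by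
  rw [repart, eval_finset_sum]
  rw [Polynomial.eval_eq_sum_range, Complex.re_sum]
  refine Finset.sum_congr rfl fun k _ => ?_
  simp [← Complex.ofReal_pow, Complex.mul_re]

lemma repart_im_eval (p : ℂ[X]) (x : ℝ) :
    (repart Complex.im p).eval x = (p.eval (x:ℂ)).im := by
  rw [repart, eval_finset_sum]
  rw [Polynomial.eval_eq_sum_range, Complex.im_sum]
  refine Finset.sum_congr rfl fun k _ => ?_
  simp [← Complex.ofReal_pow, Complex.mul_im]

lemma eq_map_repart (p : ℂ[X]) (h : repart Complex.im p = 0) :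
    p = (repart Complex.re p).map (algebraMap ℝ ℂ) := by
  have key : ∀ x : ℝ, p.eval (x:ℂ) = ((repart Complex.re p).map (algebraMap ℝ ℂ)).eval (x:ℂ) := by
    intro x
    have h1 : ((repart Complex.re p).map (algebraMap ℝ ℂ)).eval ((algebraMap ℝ ℂ) x)
        = algebraMap ℝ ℂ ((repart Complex.re p).eval x) := by
      rw [eval_map, eval₂_at_apply]
    have h2 : (p.eval (x:ℂ)).im = 0 := by rw [← repart_im_eval, h]; simp
    rw [show ((x:ℂ)) = algebraMap ℝ ℂ x from rfl, h1]
    apply Complex.ext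
    · simpa using (repart_re_eval p x).symm
    · simpa using h2
  have hz : p - (repart Complex.re p).map (algebraMap ℝ ℂ) = 0 := by
    apply eq_zero_of_infinite_isRoot
    apply Set.Infinite.mono ?_ (Set.infinite_range_of_injective Complex.ofReal_injective)
    rintro z ⟨x, rfl⟩
    simp [IsRoot, key x]
  exact sub_eq_zero.mp hz

lemma IntervalIntegrable.ofRealC {g : ℝ → ℝ} {a b : ℝ}
    (h : IntervalIntegrable g volume a b) :
    IntervalIntegrable (fun x => (g x : ℂ)) volume a b :=
  ⟨h.1.ofReal, h.2.ofReal⟩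

section OrthTransfer
variable {α β : ℝ}

lemma orth_repart (hα : -1 < α) (hβ : -1 < β)
    (p : ℂ[X]) (k : ℕ)
    (horth : ∫ x in (-1:ℝ)..1, p.eval (x:ℂ) * (x:ℂ) ^ k * (jacobiWeight α β x : ℂ) = 0) :
    (∫ x in (-1:ℝ)..1, (repart Complex.re p).eval x * x ^ k * jacobiWeight α β x = 0) ∧
    (∫ x in (-1:ℝ)..1, (repart Complex.im p).eval x * x ^ k * jacobiWeight α β x = 0) := by
  have hII : ∀ q : ℝ[X], IntervalIntegrable (fun x => q.eval x * jacobiWeight α β x) volume (-1) 1 :=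
    fun q => intervalIntegrable_poly_mul_jacobiWeight hα hβ q
  set g₁ : ℝ → ℝ := fun x => (repart Complex.re p).eval x * x ^ k * jacobiWeight α β x with hg₁d
  set g₂ : ℝ → ℝ := fun x => (repart Complex.im p).eval x * x ^ k * jacobiWeight α β x with hg₂d
  set f : ℝ → ℂ := fun x => p.eval (x:ℂ) * (x:ℂ) ^ k * (jacobiWeight α β x : ℂ) with hfd
  have hre : ∀ x : ℝ, (f x).re = g₁ x := by
    intro x
    simp only [hfd, hg₁d]
    rw [mul_assoc, ← Complex.ofReal_pow, ← Complex.ofReal_mul, Complex.mul_re]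
    simp [← Complex.ofReal_pow, repart_re_eval]
    ring
  have him : ∀ x : ℝ, (f x).im = g₂ x := by
    intro x
    simp only [hfd, hg₂d]
    rw [mul_assoc, ← Complex.ofReal_pow, ← Complex.ofReal_mul, Complex.mul_im]
    simp [← Complex.ofReal_pow, repart_im_eval]
    ring
  have hg₁ : IntervalIntegrable g₁ volume (-1) 1 := by
    have := hII (repart Complex.re p * X ^ k)
    simpa [hg₁d, mul_assoc] using this
  have hg₂ : IntervalIntegrable g₂ volume (-1) 1 := by
    have := hII (repart Complex.im p * X ^ k)
    simpa [hg₂d, mul_assoc] using this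
  have hfi : IntervalIntegrable f volume (-1) 1 := by
    have heq : f = fun x => ((g₁ x : ℂ) + Complex.I * (g₂ x : ℂ)) := by
      funext x
      apply Complex.ext <;> simp [hre x, him x]
    rw [heq]
    exact hg₁.ofRealC.add ((hg₂.ofRealC).const_mul Complex.I)
  constructor
  · have h1 := Complex.reCLM.intervalIntegral_comp_comm hfi
    rw [horth] at h1
    simp only [Complex.reCLM_apply] at h1
    calc ∫ x in (-1:ℝ)..1, g₁ x = ∫ x in (-1:ℝ)..1, (f x).re :=
          intervalIntegral.integral_congr fun x _ => (hre x).symm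
      _ = 0 := by rw [h1]; simp
  · have h1 := Complex.imCLM.intervalIntegral_comp_comm hfi
    rw [horth] at h1
    simp only [Complex.imCLM_apply] at h1
    calc ∫ x in (-1:ℝ)..1, g₂ x = ∫ x in (-1:ℝ)..1, (f x).im :=
          intervalIntegral.integral_congr fun x _ => (him x).symm
      _ = 0 := by rw [h1]; simp

end OrthTransfer

lemma sign_const_of_even_multiplicity (f : ℝ[X]) (hf : f ≠ 0) (a b : ℝ)
    (h : ∀ x ∈ Set.Ioo a b, f.IsRoot x → Even (f.rootMultiplicity x)) :
    (∀ x ∈ Set.Ioo a b, 0 ≤ f.eval x) ∨ (∀ x ∈ Set.Ioo a b, f.eval x ≤ 0) := by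
  classical
  set m := f.roots.filter (· ∈ Set.Ioo a b) with hm
  have hdvd : (m.map fun r => X - C r).prod ∣ f :=
    (Multiset.prod_dvd_prod_of_le (Multiset.map_le_map (Multiset.filter_le _ _))).trans
      f.prod_multiset_X_sub_C_dvd
  obtain ⟨g, hg⟩ := hdvd
  set h0 := (m.map fun r => X - C r).prod with hh0
  have hgne : g ≠ 0 := fun h' => hf (by rw [hg, h', mul_zero])
  have hcount : h0.roots = m := roots_multiset_prod_X_sub_C m
  have hmem : ∀ r ∈ m, f.IsRoot r ∧ r ∈ Set.Ioo a b := by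
    intro r hr
    rw [hm, Multiset.mem_filter] at hr
    exact ⟨(mem_roots hf).mp hr.1, by simpa using hr.2⟩
  have hgroot : ∀ x ∈ Set.Ioo a b, ¬ g.IsRoot x := by
    intro x hx hroot
    have h1 : f.rootMultiplicity x = h0.rootMultiplicity x + g.rootMultiplicity x := by
      rw [hg]; exact rootMultiplicity_mul (by rw [← hg]; exact hf)
    have h2 : h0.rootMultiplicity x = f.rootMultiplicity x := by
      rw [← count_roots, hcount, hm, Multiset.count_filter]
      simp [hx, count_roots]
    have h3 : 0 < g.rootMultiplicity x := (rootMultiplicity_pos hgne).mpr hroot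
    omega
  have hh0nn : ∀ x ∈ Set.Ioo a b, 0 ≤ h0.eval x := by
    intro x hx
    rw [hh0, eval_multiset_prod, Multiset.map_map]
    have : (Multiset.map (eval x ∘ fun r => X - C r) m) = Multiset.map (fun r => x - r) m := by
      apply Multiset.map_congr rfl; intro r _; simp
    rw [this, Finset.prod_multiset_map_count]
    apply Finset.prod_nonneg
    intro r hr
    obtain ⟨hroot, hrIoo⟩ := hmem r (Multiset.mem_toFinset.mp hr)
    have hcnt : m.count r = f.rootMultiplicity r := by
      rw [hm, Multiset.count_filter]
      simp [hrIoo, count_roots]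
    rw [hcnt]
    exact Even.pow_nonneg (h r hrIoo hroot) _
  have hgsign : (∀ x ∈ Set.Ioo a b, 0 ≤ g.eval x) ∨ (∀ x ∈ Set.Ioo a b, g.eval x ≤ 0) := by
    by_contra hcon
    push_neg at hcon
    obtain ⟨⟨x₁, hx₁, hx₁'⟩, ⟨x₂, hx₂, hx₂'⟩⟩ := hcon
    have hc : ContinuousOn (fun y => g.eval y) (Set.uIcc x₁ x₂) := g.continuous.continuousOn
    have h0mem : (0:ℝ) ∈ Set.uIcc (g.eval x₁) (g.eval x₂) :=
      Set.mem_uIcc.mpr (Or.inl ⟨hx₁'.le, hx₂'.le⟩)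
    obtain ⟨z, hz, hz0⟩ := intermediate_value_uIcc hc h0mem
    have hzIoo : z ∈ Set.Ioo a b := (Set.ordConnected_Ioo.uIcc_subset hx₁ hx₂) hz
    exact hgroot z hzIoo hz0
  have heval : ∀ x : ℝ, f.eval x = h0.eval x * g.eval x := by
    intro x; rw [hg, eval_mul]
  rcases hgsign with hpos | hneg
  · exact Or.inl fun x hx => by
      rw [heval]; exact mul_nonneg (hh0nn x hx) (hpos x hx)
  · exact Or.inr fun x hx => by
      rw [heval]; exact mul_nonpos_of_nonneg_of_nonpos (hh0nn x hx) (hneg x hx)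

lemma roots_of_orthogonal {α β : ℝ} (hα : -1 < α) (hβ : -1 < β) {n : ℕ}
    (R : ℝ[X]) (hmon : R.Monic) (hdeg : R.natDegree = n)
    (horth : ∀ k, k < n → ∫ x in (-1:ℝ)..1, R.eval x * x ^ k * jacobiWeight α β x = 0) :
    Multiset.card R.roots = n ∧ R.roots.Nodup ∧ ∀ r ∈ R.roots, r ∈ Set.Ioo (-1:ℝ) 1 := by
  classical
  have hR0 : R ≠ 0 := hmon.ne_zero
  set S := R.roots.toFinset.filter
      (fun r => r ∈ Set.Ioo (-1:ℝ) 1 ∧ ¬ Even (R.rootMultiplicity r)) with hS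
  set q := ∏ r ∈ S, (X - C r) with hq
  have hq0 : q ≠ 0 := (monic_prod_of_monic _ _ fun r _ => monic_X_sub_C r).ne_zero
  have hqdeg : q.natDegree = S.card := by
    rw [hq, natDegree_prod _ _ fun r _ => X_sub_C_ne_zero r]
    simp
  have hqroots : q.roots = S.val := roots_prod_X_sub_C S
  have hRq0 : R * q ≠ 0 := mul_ne_zero hR0 hq0
  have heven : ∀ x ∈ Set.Ioo (-1:ℝ) 1, (R*q).IsRoot x → Even ((R*q).rootMultiplicity x) := by
    intro x hx hroot
    have h1 : (R*q).rootMultiplicity x = R.rootMultiplicity x + q.rootMultiplicity x :=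
      rootMultiplicity_mul hRq0
    have hqmult : q.rootMultiplicity x = if x ∈ S then 1 else 0 := by
      rw [← count_roots, hqroots]
      split_ifs with hmemS
      · exact Multiset.count_eq_one_of_mem S.nodup hmemS
      · exact Multiset.count_eq_zero_of_notMem hmemS
    by_cases hRroot : R.IsRoot x
    · by_cases hev : Even (R.rootMultiplicity x)
      · have hxS : x ∉ S := by
          rw [hS, Finset.mem_filter]
          rintro ⟨-, -, hodd⟩
          exact hodd hev
        rw [h1, hqmult, if_neg hxS, add_zero]
        exact hev
      · have hxS : x ∈ S := by
          rw [hS, Finset.mem_filter]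
          exact ⟨Multiset.mem_toFinset.mpr ((mem_roots hR0).mpr hRroot), hx, hev⟩
        rw [h1, hqmult, if_pos hxS]
        exact Nat.even_add_one.mpr hev
    · exfalso
      have hR0' : R.rootMultiplicity x = 0 := rootMultiplicity_eq_zero hRroot
      have hxS : x ∉ S := by
        rw [hS, Finset.mem_filter]
        rintro ⟨hmem', -, -⟩
        exact hRroot ((mem_roots hR0).mp (Multiset.mem_toFinset.mp hmem'))
      have hpos := (rootMultiplicity_pos hRq0).mpr hroot
      rw [h1, hR0', hqmult, if_neg hxS] at hpos
      omega
  have hcard : ¬ S.card < n := by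
    intro hlt
    have hzero : ∫ x in (-1:ℝ)..1, (R * q).eval x * jacobiWeight α β x = 0 :=
      integral_mul_eq_zero_of_orth hα hβ R q n (by omega) horth
    rcases sign_const_of_even_multiplicity (R*q) hRq0 (-1) 1 heven with hpos | hneg
    · have := integral_poly_mul_jacobiWeight_pos hα hβ (R*q) hRq0 hpos
      rw [hzero] at this; exact lt_irrefl _ this
    · have h2 : ∀ x ∈ Set.Ioo (-1:ℝ) 1, 0 ≤ (-(R*q)).eval x := by
        intro x hx; simpa using hneg x hx
      have hp := integral_poly_mul_jacobiWeight_pos hα hβ (-(R*q)) (neg_ne_zero.mpr hRq0) h2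
      have heq : (∫ x in (-1:ℝ)..1, (-(R*q)).eval x * jacobiWeight α β x)
          = -∫ x in (-1:ℝ)..1, (R*q).eval x * jacobiWeight α β x := by
        rw [← intervalIntegral.integral_neg]
        apply intervalIntegral.integral_congr
        intro x _; simp
      rw [heq, hzero] at hp
      simp at hp
  push_neg at hcard
  have h1 : S.card ≤ R.roots.toFinset.card := Finset.card_le_card (Finset.filter_subset _ _)
  have h2 : R.roots.toFinset.card ≤ Multiset.card R.roots := Multiset.toFinset_card_le _
  have h3 : Multiset.card R.roots ≤ R.natDegree := R.card_roots'
  have hcardn : Multiset.card R.roots = n := by omega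
  have hnodup : R.roots.Nodup := by
    rw [← Multiset.toFinset_card_eq_card_iff_nodup]
    omega
  have hSeq : S = R.roots.toFinset :=
    Finset.eq_of_subset_of_card_le (Finset.filter_subset _ _) (by omega)
  refine ⟨hcardn, hnodup, fun r hr => ?_⟩
  have hrS : r ∈ S := by rw [hSeq]; exact Multiset.mem_toFinset.mpr hr
  rw [hS, Finset.mem_filter] at hrS
  exact hrS.2.1

/-- every root of `P_n(·;α,β;ξ)` has multiplicity at most 2, and every
double root is a real number in `[-1,1]`. -/
theorem polarJacobi_root_multiplicity (α β : ℝ) (hα : -1 < α) (hβ : -1 < β)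
    (J : ℕ → Polynomial ℂ)
    (hJmonic : ∀ n, (J n).Monic) (hJdeg : ∀ n, (J n).natDegree = n)
    (hJorth : ∀ n k : ℕ, k < n →
      ∫ x in (-1 : ℝ)..1, (J n).eval (x : ℂ) * (x : ℂ) ^ k * (jacobiWeight α β x : ℂ) = 0)
    (ξ : ℂ) (P : ℕ → Polynomial ℂ)
    (hP : ∀ (n : ℕ) (z : ℂ), (P n).eval z + (z - ξ) * ((P n).derivative.eval z)
        = ((n : ℂ) + 1) * (J n).eval z)
    (n : ℕ) (hn : 1 ≤ n) :
    ∀ ζ : ℂ,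
      Polynomial.rootMultiplicity ζ (P n) ≤ 2 ∧
      (Polynomial.rootMultiplicity ζ (P n) = 2 →
        ζ.im = 0 ∧ ζ.re ∈ Set.Icc (-1 : ℝ) 1) := by
  classical
  -- Step 1 : the imaginary part of `J n` vanishes
  have horthR := fun k (hk : k < n) => orth_repart hα hβ (J n) k (hJorth n k hk)
  set Sm := repart Complex.im (J n) with hSmdef
  have hSm0 : Sm = 0 := by
    by_contra hne
    have hdegS : Sm.natDegree < n := by
      have hle : Sm.natDegree ≤ n := (repart_natDegree_le _ _).trans (le_of_eq (hJdeg n))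
      rcases lt_or_eq_of_le hle with hlt | heq
      · exact hlt
      · exfalso
        have hlead : Sm.coeff n ≠ 0 := by
          rw [← heq]
          exact mt leadingCoeff_eq_zero.mp hne
        apply hlead
        rw [hSmdef, repart_coeff]
        rw [if_pos (le_of_eq (hJdeg n).symm)]
        have : (J n).coeff n = 1 := by
          have := (hJmonic n).leadingCoeff
          rwa [leadingCoeff, hJdeg n] at this
        rw [this]
        simp
    have hzero : ∫ x in (-1:ℝ)..1, (Sm * Sm).eval x * jacobiWeight α β x = 0 :=
      integral_mul_eq_zero_of_orth hα hβ Sm Sm n hdegS (fun k hk => (horthR k hk).2)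
    have hpos := integral_poly_mul_jacobiWeight_pos hα hβ (Sm*Sm) (mul_ne_zero hne hne)
        (fun x _ => by rw [eval_mul]; exact mul_self_nonneg _)
    rw [hzero] at hpos
    exact lt_irrefl _ hpos
  -- Step 2 : `J n` comes from a real polynomial `R`
  set R := repart Complex.re (J n) with hRdef
  have hmap : J n = R.map (algebraMap ℝ ℂ) := eq_map_repart (J n) hSm0
  have hinj : Function.Injective (algebraMap ℝ ℂ) := (algebraMap ℝ ℂ).injective
  have hRdeg : R.natDegree = n := by
    have := hJdeg n
    rw [hmap, natDegree_map_eq_of_injective hinj] at this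
    exact this
  have hRmon : R.Monic := by
    have h1 : (J n).coeff n = 1 := by
      have := (hJmonic n).leadingCoeff
      rwa [leadingCoeff, hJdeg n] at this
    rw [hmap, coeff_map] at h1
    have : algebraMap ℝ ℂ (R.coeff n) = algebraMap ℝ ℂ 1 := by simpa using h1
    have h2 := hinj this
    rwa [Monic, leadingCoeff, hRdeg]
  -- Step 3 : `R` has `n` simple roots in `(-1,1)`
  obtain ⟨hcardn, hnodup, hloc⟩ := roots_of_orthogonal hα hβ R hRmon hRdeg
    (fun k hk => (horthR k hk).1)
  -- Step 4 : `J n` factors into distinct linear factors over real points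
  have hRsplit : (R.roots.map fun r => X - C r).prod = R :=
    prod_multiset_X_sub_C_of_monic_of_roots_card_eq hRmon (by rw [hcardn, hRdeg])
  set M : Multiset ℂ := R.roots.map (fun r : ℝ => (r : ℂ)) with hM
  have hJfact : J n = (M.map fun z => X - C z).prod := by
    rw [hmap, ← hRsplit, Polynomial.map_multiset_prod, Multiset.map_map, hM, Multiset.map_map]
    congr 1
    apply Multiset.map_congr rfl
    intro r _
    simp [Polynomial.map_sub]
  have hJroots : (J n).roots = M := by rw [hJfact]; exact roots_multiset_prod_X_sub_C M
  have hMnodup : M.Nodup := hnodup.map Complex.ofReal_injective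
  have hJn0 : J n ≠ 0 := (hJmonic n).ne_zero
  have hJmult : ∀ ζ : ℂ, (J n).rootMultiplicity ζ ≤ 1 := by
    intro ζ
    rw [← count_roots, hJroots]
    exact Multiset.nodup_iff_count_le_one.mp hMnodup ζ
  have hJloc : ∀ ζ : ℂ, (J n).IsRoot ζ → ζ.im = 0 ∧ ζ.re ∈ Set.Icc (-1:ℝ) 1 := by
    intro ζ hroot
    have : ζ ∈ (J n).roots := (mem_roots hJn0).mpr hroot
    rw [hJroots, hM] at this
    obtain ⟨r, hr, rfl⟩ := Multiset.mem_map.mp this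
    have := hloc r hr
    exact ⟨by simp, by simpa using ⟨this.1.le, this.2.le⟩⟩
  -- Step 5 : the differential equation at the polynomial level
  set A := P n with hA
  have hpoly : A + (X - C ξ) * A.derivative = C ((n : ℂ) + 1) * J n := by
    apply Polynomial.funext
    intro z
    simp only [eval_add, eval_mul, eval_sub, eval_X, eval_C]
    exact hP n z
  have hA0 : A ≠ 0 := by
    intro h
    rw [h] at hpoly
    simp only [derivative_zero, mul_zero, add_zero, zero_add] at hpoly
    have : C ((n : ℂ) + 1) * J n ≠ 0 := by
      apply mul_ne_zero _ hJn0
      rw [Ne, C_eq_zero]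
      exact Nat.cast_add_one_ne_zero n
    exact this hpoly.symm
  have hCunit : IsUnit (C ((n : ℂ) + 1)) := by
    rw [isUnit_C]
    exact isUnit_iff_ne_zero.mpr (Nat.cast_add_one_ne_zero n)
  -- Key : if `rootMultiplicity ζ A ≥ 2` then `(X - C ζ)^(m-1) ∣ J n`
  have hkey : ∀ ζ : ℂ, 2 ≤ A.rootMultiplicity ζ →
      A.rootMultiplicity ζ - 1 ≤ (J n).rootMultiplicity ζ := by
    intro ζ hm2
    set m := A.rootMultiplicity ζ with hmdef
    have hroot : A.IsRoot ζ := by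
      rw [← rootMultiplicity_pos hA0]; omega
    have hder : A.derivative.rootMultiplicity ζ = m - 1 :=
      derivative_rootMultiplicity_of_root hroot
    have hdvdA : (X - C ζ) ^ (m - 1) ∣ A :=
      dvd_trans (pow_dvd_pow _ (Nat.sub_le m 1)) (pow_rootMultiplicity_dvd A ζ)
    have hdvdD : (X - C ζ) ^ (m - 1) ∣ A.derivative := by
      have := pow_rootMultiplicity_dvd A.derivative ζ
      rwa [hder] at this
    have hdvdJ : (X - C ζ) ^ (m - 1) ∣ C ((n : ℂ) + 1) * J n := by
      rw [← hpoly]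
      exact dvd_add hdvdA (Dvd.dvd.mul_left hdvdD _)
    rw [hCunit.dvd_mul_left] at hdvdJ
    exact (le_rootMultiplicity_iff hJn0).mpr hdvdJ
  intro ζ
  constructor
  · by_contra hgt
    push_neg at hgt
    have h3 : 3 ≤ A.rootMultiplicity ζ := hgt
    have := hkey ζ (by omega)
    have := hJmult ζ
    omega
  · intro hm2
    have h1 := hkey ζ (le_of_eq hm2.symm)
    rw [hm2] at h1
    have hroot : (J n).IsRoot ζ := by
      rw [← rootMultiplicity_pos hJn0]; omega
    exact hJloc ζ hroot
end

section
/- Let ξ ∈ ℂ, n ≥ 0 an integer, and let Q ∈ ℂ[X] be any polynomial whose derivative satisfies Q′ = (n+1)·P_n^{(α,β)}. Then every zero ζ ∈ ℂ of the polar Jacobi polynomial P_n(·;α,β;ξ) satisfies Q(ζ) = Q(ξ); i.e., all zeros of P_n(·;α,β;ξ) lie on the level set {z ∈ ℂ : Q(z) = Q(ξ)}. -/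
open Polynomial

/-- if `Q' = (n+1) P_n^{(α,β)}`, then every zero of `P_n(·;α,β;ξ)` lies
on the level set `{z : Q(z) = Q(ξ)}`. -/
theorem polarJacobi_zeros_on_level_set (α β : ℝ) (hα : -1 < α) (hβ : -1 < β)
    (J : ℕ → Polynomial ℂ)
    (hJmonic : ∀ n, (J n).Monic) (hJdeg : ∀ n, (J n).natDegree = n)
    (hJorth : ∀ n k : ℕ, k < n →
      ∫ x in (-1 : ℝ)..1, (J n).eval (x : ℂ) * (x : ℂ) ^ k * (jacobiWeight α β x : ℂ) = 0)
    (ξ : ℂ) (P : ℕ → Polynomial ℂ)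
    (hP : ∀ (n : ℕ) (z : ℂ), (P n).eval z + (z - ξ) * ((P n).derivative.eval z)
        = ((n : ℂ) + 1) * (J n).eval z)
    (n : ℕ) (Q : Polynomial ℂ)
    (hQ : Q.derivative = Polynomial.C ((n : ℂ) + 1) * J n) :
    ∀ ζ : ℂ, (P n).eval ζ = 0 → Q.eval ζ = Q.eval ξ := by
  intro ζ hζ
  set R : Polynomial ℂ := Q - (X - C ξ) * P n with hR
  have hder : R.derivative = 0 := by
    apply Polynomial.funext
    intro z
    simp only [hR, derivative_sub, derivative_mul, derivative_sub, derivative_X,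
      derivative_C, sub_zero, one_mul, eval_sub, eval_mul, eval_add, eval_sub,
      eval_X, eval_C, eval_zero, hQ]
    have := hP n z
    ring_nf
    ring_nf at this
    linear_combination -this
  have hc : R.natDegree = 0 := natDegree_eq_zero_of_derivative_eq_zero hder
  obtain ⟨c, hcR⟩ := Polynomial.natDegree_eq_zero.mp hc
  have h1 : R.eval ζ = c := by rw [← hcR]; simp
  have h2 : R.eval ξ = c := by rw [← hcR]; simp
  have e1 : R.eval ζ = Q.eval ζ := by simp [hR, hζ]
  have e2 : R.eval ξ = Q.eval ξ := by simp [hR]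
  rw [← e1, ← e2, h1, h2]
end
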